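/- arXiv:1608.04997 — 7 statements merged into one kernel-verified Lean document; each statement's English description precedes it below -/
import Mathlib

section
/- Let ι be an index type and, for each i ∈ ι, let I i ⊆ ℝ be a nonempty preconnected set (an interval), with the sets I i pairwise disjoint. Let D = ⋃ i, I i and assume that every point p ∈ I i has a neighborhood U with D ∩ U = I i ∩ U (the intervals are separated in D). Let f, F : ℝ → ℝ with F a primitive of f on D. Then a function φ : ℝ → ℝ is a primitive of f on D if and only if for each i ∈ ι there exists a constant c i ∈ ℝ such that φ(x) = F(x) + c i for all x ∈ I i. -/
/-!
Near each point of `I i` the domain `D` coincides with `I i`, so being a primitive on `D` is the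
same as being a primitive on every `I i`. On a single interval, two primitives differ by a
function with zero derivative, which is constant by the mean value theorem.
-/

open Set Topology

section

variable {𝕜 G : Type*} [RCLike 𝕜] [NormedAddCommGroup G] [NormedSpace 𝕜 G]

theorem hasDerivWithinAt_congr_of_inter_eq {g : 𝕜 → G} {g' : G} {s t U : Set 𝕜} {x : 𝕜}
    (hU : U ∈ 𝓝 x) (h : s ∩ U = t ∩ U) :
    HasDerivWithinAt g g' s x ↔ HasDerivWithinAt g g' t x := by
  rw [← hasDerivWithinAt_inter hU, h, hasDerivWithinAt_inter hU]

theorem forall_hasDerivWithinAt_iUnion_iff {ι : Type*} (I : ι → Set 𝕜)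
    (hsep : ∀ i, ∀ p ∈ I i, ∃ U ∈ 𝓝 p, (⋃ j, I j) ∩ U = I i ∩ U) (g g' : 𝕜 → G) :
    (∀ x ∈ ⋃ j, I j, HasDerivWithinAt g (g' x) (⋃ j, I j) x) ↔
      ∀ i, ∀ x ∈ I i, HasDerivWithinAt g (g' x) (I i) x := by
  have hloc : ∀ i, ∀ x ∈ I i,
      HasDerivWithinAt g (g' x) (⋃ j, I j) x ↔ HasDerivWithinAt g (g' x) (I i) x := by
    intro i x hx
    obtain ⟨U, hU, h⟩ := hsep i x hx
    exact hasDerivWithinAt_congr_of_inter_eq hU h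
  simp only [mem_iUnion, forall_exists_index]
  rw [forall_comm]
  exact forall_congr' fun i => forall₂_congr fun x hx => hloc i x hx

theorem Convex.exists_eq_const_of_hasDerivWithinAt_zero {g : 𝕜 → G} {s : Set 𝕜}
    (hs : Convex ℝ s) (hg : ∀ x ∈ s, HasDerivWithinAt g 0 s x) : ∃ c, ∀ x ∈ s, g x = c := by
  rcases s.eq_empty_or_nonempty with rfl | ⟨x₀, hx₀⟩
  · exact ⟨0, fun x hx => hx.elim⟩
  refine ⟨g x₀, fun x hx => ?_⟩
  have h := hs.norm_image_sub_le_of_norm_hasDerivWithin_le hg (C := 0) (fun _ _ => by simp) hx₀ hx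
  rwa [zero_mul, norm_le_zero_iff, sub_eq_zero] at h

end

theorem IsPreconnected.hasDerivWithinAt_iff_eq_add_const {G : Type*} [NormedAddCommGroup G]
    [NormedSpace ℝ G] {s : Set ℝ} (hs : IsPreconnected s) {f F : ℝ → G}
    (hF : ∀ x ∈ s, HasDerivWithinAt F (f x) s x) (φ : ℝ → G) :
    (∀ x ∈ s, HasDerivWithinAt φ (f x) s x) ↔ ∃ c, ∀ x ∈ s, φ x = F x + c := by
  constructor
  · intro hφ
    have hderiv : ∀ x ∈ s, HasDerivWithinAt (φ - F) 0 s x := fun x hx => by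
      simpa using (hφ x hx).sub (hF x hx)
    obtain ⟨c, hc⟩ := hs.ordConnected.convex.exists_eq_const_of_hasDerivWithinAt_zero hderiv
    exact ⟨c, fun x hx => eq_add_of_sub_eq' (hc x hx)⟩
  · rintro ⟨c, hc⟩ x hx
    exact ((hF x hx).add_const c).congr hc (hc x hx)

theorem stmt1_general {ι : Type*} (I : ι → Set ℝ)
    (hconn : ∀ i, IsPreconnected (I i))
    (D : Set ℝ) (hD : D = ⋃ i, I i)
    (hsep : ∀ i, ∀ p ∈ I i, ∃ U ∈ nhds p, D ∩ U = I i ∩ U)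
    (f F : ℝ → ℝ) (hF : ∀ x ∈ D, HasDerivWithinAt F (f x) D x) (φ : ℝ → ℝ) :
    (∀ x ∈ D, HasDerivWithinAt φ (f x) D x) ↔
      ∀ i, ∃ c : ℝ, ∀ x ∈ I i, φ x = F x + c := by
  subst hD
  rw [forall_hasDerivWithinAt_iUnion_iff I hsep] at hF ⊢
  exact forall_congr' fun i => (hconn i).hasDerivWithinAt_iff_eq_add_const (hF i) φ

theorem stmt1 {ι : Type*} (I : ι → Set ℝ) (hne : ∀ i, (I i).Nonempty)
    (hconn : ∀ i, IsPreconnected (I i))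
    (hdisj : Pairwise fun i j => Disjoint (I i) (I j))
    (D : Set ℝ) (hD : D = ⋃ i, I i)
    (hsep : ∀ i, ∀ p ∈ I i, ∃ U ∈ nhds p, D ∩ U = I i ∩ U)
    (f F : ℝ → ℝ) (hF : ∀ x ∈ D, HasDerivWithinAt F (f x) D x) (φ : ℝ → ℝ) :
    (∀ x ∈ D, HasDerivWithinAt φ (f x) D x) ↔
      ∀ i, ∃ c : ℝ, ∀ x ∈ I i, φ x = F x + c :=
  stmt1_general I hconn D hD hsep f F hF φ
end

section
/- Let ι be an index type and, for each i ∈ ι, let I i ⊆ ℝ be a nonempty preconnected set (an interval), with the sets I i pairwise disjoint. Let D = ⋃ i, I i and assume that every point p ∈ I i has a neighborhood U with D ∩ U = I i ∩ U (the intervals are separated in D). If f : ℝ → ℝ is continuous on D, then there exists a function F : ℝ → ℝ that is a primitive of f on D. -/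
/-!
On each interval `I i` the integral `u ↦ ∫ t in a i..u, f t` from a base point `a i ∈ I i`
is a primitive of `f` within `I i`: near a point `x`, `f` coincides with the continuous function
`f ∘ projIcc c d` for some `c ≤ x ≤ d` in `I i`, to which the fundamental theorem of calculus
applies. These primitives are glued into one function on `D`; since `D` coincides with `I i`
near each point of `I i`, derivatives within `I i` are derivatives within `D`.
-/

open Set Filter Topology Function MeasureTheory intervalIntegral

theorem exists_Icc_mem_nhdsWithin {α : Type*} [LinearOrder α] [TopologicalSpace α]
    [OrderTopology α] {s : Set α} {x : α} (hx : x ∈ s) :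
    ∃ c ∈ s, ∃ d ∈ s, c ≤ x ∧ x ≤ d ∧ Icc c d ∈ 𝓝[s] x := by
  obtain ⟨c, hcs, hcx, hc⟩ : ∃ c ∈ s, c ≤ x ∧ Ici c ∈ 𝓝[s] x := by
    by_cases h : ∃ c ∈ s, c < x
    · obtain ⟨c, hcs, hcx⟩ := h
      exact ⟨c, hcs, hcx.le, mem_nhdsWithin_of_mem_nhds (Ici_mem_nhds hcx)⟩
    · push Not at h
      exact ⟨x, hx, le_rfl, mem_of_superset self_mem_nhdsWithin h⟩
  obtain ⟨d, hds, hxd, hd⟩ : ∃ d ∈ s, x ≤ d ∧ Iic d ∈ 𝓝[s] x := by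
    by_cases h : ∃ d ∈ s, x < d
    · obtain ⟨d, hds, hxd⟩ := h
      exact ⟨d, hds, hxd.le, mem_nhdsWithin_of_mem_nhds (Iic_mem_nhds hxd)⟩
    · push Not at h
      exact ⟨x, hx, le_rfl, mem_of_superset self_mem_nhdsWithin h⟩
  exact ⟨c, hcs, d, hds, hcx, hxd, Ici_inter_Iic (a := c) (b := d) ▸ inter_mem hc hd⟩

theorem ContinuousOn.hasDerivWithinAt_integral_of_ordConnected {E : Type*}
    [NormedAddCommGroup E] [NormedSpace ℝ E] [CompleteSpace E] {s : Set ℝ} (hs : s.OrdConnected)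
    {f : ℝ → E} (hf : ContinuousOn f s) {a x : ℝ} (ha : a ∈ s) (hx : x ∈ s) :
    HasDerivWithinAt (fun u => ∫ t in a..u, f t) (f x) s x := by
  obtain ⟨c, hcs, d, hds, hcx, hxd, hcd⟩ := exists_Icc_mem_nhdsWithin hx
  have hcd_sub : Icc c d ⊆ s := hs.out hcs hds
  set g : ℝ → E := IccExtend (hcx.trans hxd) ((Icc c d).domRestrict f)
  have hg : Continuous g := continuous_IccExtend_iff.mpr (hf.mono hcd_sub).domRestrict
  have hfg : EqOn f g (Icc c d) := fun u hu =>
    (IccExtend_of_mem _ ((Icc c d).domRestrict f) hu).symm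
  have hG : HasDerivAt (fun u => (∫ t in a..c, f t) + ∫ t in c..u, g t) (f x) x := by
    rw [hfg ⟨hcx, hxd⟩]
    exact ((hg.integral_hasStrictDerivAt c x).hasDerivAt).const_add _
  refine hG.hasDerivWithinAt.congr_of_eventuallyEq_of_mem ?_ hx
  filter_upwards [hcd] with u hu
  have hintegrable {p q : ℝ} (hp : p ∈ s) (hq : q ∈ s) : IntervalIntegrable f volume p q :=
    (hf.mono (hs.uIcc_subset hp hq)).intervalIntegrable
  have hfg_cu : EqOn f g (uIcc c u) := hfg.mono (uIcc_of_le hu.1 ▸ Icc_subset_Icc_right hu.2)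
  rw [← integral_add_adjacent_intervals (hintegrable ha hcs) (hintegrable hcs (hcd_sub hu)),
    integral_congr hfg_cu]

theorem exists_forall_mem_eq_of_pairwise_disjoint {α β ι : Type*} [Nonempty β]
    {I : ι → Set α} (hdisj : Pairwise (Disjoint on I)) (G : ι → α → β) :
    ∃ F : α → β, ∀ i, ∀ x ∈ I i, F x = G i x := by
  classical
  refine ⟨fun x => if h : ∃ i, x ∈ I i then G h.choose x else Classical.arbitrary β,
    fun i x hx => ?_⟩
  have h : ∃ i, x ∈ I i := ⟨i, hx⟩
  obtain rfl : h.choose = i := hdisj.eq (not_disjoint_iff.mpr ⟨x, h.choose_spec, hx⟩)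
  exact dif_pos h

theorem exists_hasDerivWithinAt_iUnion {𝕜 E ι : Type*} [NontriviallyNormedField 𝕜]
    [NormedAddCommGroup E] [NormedSpace 𝕜 E] {I : ι → Set 𝕜}
    (hdisj : Pairwise (Disjoint on I))
    (hsep : ∀ i, ∀ p ∈ I i, ∃ U ∈ 𝓝 p, (⋃ j, I j) ∩ U = I i ∩ U)
    {f : 𝕜 → E} {G : ι → 𝕜 → E}
    (hG : ∀ i, ∀ x ∈ I i, HasDerivWithinAt (G i) (f x) (I i) x) :
    ∃ F : 𝕜 → E, ∀ x ∈ ⋃ i, I i, HasDerivWithinAt F (f x) (⋃ i, I i) x := by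
  obtain ⟨F, hF⟩ := exists_forall_mem_eq_of_pairwise_disjoint hdisj G
  refine ⟨F, fun x hx => ?_⟩
  obtain ⟨i, hxi⟩ := mem_iUnion.mp hx
  obtain ⟨U, hU, hDU⟩ := hsep i x hxi
  rw [← hasDerivWithinAt_inter hU, hDU, hasDerivWithinAt_inter hU]
  exact (hG i x hxi).congr_of_mem (hF i) hxi

theorem stmt2 {ι : Type*} (I : ι → Set ℝ) (hne : ∀ i, (I i).Nonempty)
    (hconn : ∀ i, IsPreconnected (I i))
    (hdisj : Pairwise fun i j => Disjoint (I i) (I j))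
    (D : Set ℝ) (hD : D = ⋃ i, I i)
    (hsep : ∀ i, ∀ p ∈ I i, ∃ U ∈ nhds p, D ∩ U = I i ∩ U)
    (f : ℝ → ℝ) (hf : ContinuousOn f D) :
    ∃ F : ℝ → ℝ, ∀ x ∈ D, HasDerivWithinAt F (f x) D x := by
  subst hD
  choose a ha using hne
  exact exists_hasDerivWithinAt_iUnion hdisj hsep fun i _ hx =>
    (hf.mono (subset_iUnion I i)).hasDerivWithinAt_integral_of_ordConnected
      (hconn i).ordConnected (ha i) hx
end

section
/- Let s, t ⊆ ℝ and let g : ℝ → ℝ map s bijectively onto t, with inverse h : ℝ → ℝ (so h(g(x)) = x for x ∈ s and g(h(y)) = y for y ∈ t). Assume there are g', h' : ℝ → ℝ such that for every x ∈ s, g has derivative g'(x) at x within s, and for every y ∈ t, h has derivative h'(y) at y within t (g is a diffeomorphism from s onto t). Let f : ℝ → ℝ. Then a function F : ℝ → ℝ is a primitive of f on t if and only if there exists a primitive H of the function x ↦ f(g(x))·g'(x) on s such that F(y) = H(h(y)) for all y ∈ t. -/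
open Filter Topology


theorem stmt7 (s t : Set ℝ) (g h : ℝ → ℝ)
    (hgm : Set.MapsTo g s t) (hhm : Set.MapsTo h t s)
    (hinv1 : ∀ x ∈ s, h (g x) = x) (hinv2 : ∀ y ∈ t, g (h y) = y)
    (g' h' : ℝ → ℝ)
    (hg : ∀ x ∈ s, HasDerivWithinAt g (g' x) s x)
    (hh : ∀ y ∈ t, HasDerivWithinAt h (h' y) t y)
    (f : ℝ → ℝ) (F : ℝ → ℝ) :
    (∀ y ∈ t, HasDerivWithinAt F (f y) t y) ↔
      ∃ H : ℝ → ℝ, (∀ x ∈ s, HasDerivWithinAt H (f (g x) * g' x) s x) ∧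
        ∀ y ∈ t, F y = H (h y) := by
  constructor
  · intro hF
    refine ⟨F ∘ g, fun x hx => ?_, fun y hy => ?_⟩
    · exact (hF (g x) (hgm hx)).comp x (hg x hx) hgm
    · simp [hinv2 y hy]
  · rintro ⟨H, hH, hFH⟩
    intro y hy
    have hx : h y ∈ s := hhm hy
    -- F agrees with H ∘ h on t
    have hcong : HasDerivWithinAt (H ∘ h) ((f (g (h y)) * g' (h y)) * h' y) t y :=
      (hH (h y) hx).comp y (hh y hy) hhm
    have hF' : HasDerivWithinAt F ((f (g (h y)) * g' (h y)) * h' y) t y :=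
      hcong.congr (fun z hz => (hFH z hz)) (hFH y hy)
    rw [hinv2 y hy] at hF'
    by_cases hbot : 𝓝[t \ {y}] y = ⊥
    · rw [hasDerivWithinAt_iff_tendsto_slope, hbot]
      exact tendsto_bot
    · -- g ∘ h = id on t, so g' (h y) * h' y = 1
      have h1 : HasDerivWithinAt (g ∘ h) (g' (h y) * h' y) t y :=
        (hg (h y) hx).comp y (hh y hy) hhm
      have h2 : HasDerivWithinAt (fun z : ℝ => z) (g' (h y) * h' y) t y :=
        h1.congr (fun z hz => (hinv2 z hz).symm) (hinv2 y hy).symm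
      have h3 : HasDerivWithinAt (fun z : ℝ => z) (1 : ℝ) t y := hasDerivWithinAt_id y t
      haveI : (𝓝[t \ {y}] y).NeBot := ⟨hbot⟩
      have heq : g' (h y) * h' y = 1 := by
        rw [hasDerivWithinAt_iff_tendsto_slope] at h2 h3
        exact tendsto_nhds_unique h2 h3
      have : f y * g' (h y) * h' y = f y := by rw [mul_assoc, heq, mul_one]
      rwa [this] at hF'
end

section
/- Let a < b and c < d be real numbers, and let g : ℝ → ℝ map [a,b] bijectively onto [c,d], with inverse h : ℝ → ℝ (so h(g(x)) = x for x ∈ [a,b] and g(h(y)) = y for y ∈ [c,d]). Assume there is g' : ℝ → ℝ such that for every x ∈ [a,b], g has derivative g'(x) at x within [a,b]; assume h is continuous on [c,d] and differentiable at every point of the open interval (c,d); and assume f : ℝ → ℝ is continuous on [c,d]. Then a function F : ℝ → ℝ is a primitive of f on [c,d] if and only if there exists a primitive H of the function x ↦ f(g(x))·g'(x) on [a,b] such that F(y) = H(h(y)) for all y ∈ [c,d]. -/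
/-!
The chain rule turns a primitive `F` of `f` into the primitive `F ∘ g`. Conversely, `f` has some
primitive `F₀` on `[c, d]` (an integral), so `H` and `F₀ ∘ g` are primitives of the same function
on the interval `[a, b]` and differ by a constant; composing with `h` shows that `F` and `F₀` differ
by a constant on `[c, d]`.
-/

open Set

section

variable {E : Type*} [NormedAddCommGroup E] [NormedSpace ℝ E]

theorem Convex.is_const_of_hasDerivWithinAt_zero {s : Set ℝ} (hs : Convex ℝ s) {φ : ℝ → E}
    (hφ : ∀ x ∈ s, HasDerivWithinAt φ 0 s x) {x y : ℝ} (hx : x ∈ s) (hy : y ∈ s) :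
    φ x = φ y := by
  have := hs.norm_image_sub_le_of_norm_hasDerivWithin_le hφ (fun _ _ => norm_zero.le) hy hx
  rwa [zero_mul, norm_le_zero_iff, sub_eq_zero] at this

theorem ContinuousOn.exists_forall_hasDerivWithinAt_Icc [CompleteSpace E] {c d : ℝ}
    {f : ℝ → E} (hf : ContinuousOn f (Icc c d)) :
    ∃ F : ℝ → E, ∀ y ∈ Icc c d, HasDerivWithinAt F (f y) (Icc c d) y := by
  rcases le_or_gt c d with hcd | hdc
  · have hfExt : Continuous (IccExtend hcd ((Icc c d).domRestrict f)) :=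
      hf.domRestrict.Icc_extend'
    refine ⟨fun y => ∫ t in c..y, IccExtend hcd ((Icc c d).domRestrict f) t, fun y hy => ?_⟩
    have := (hfExt.integral_hasStrictDerivAt c y).hasDerivAt.hasDerivWithinAt (s := Icc c d)
    rwa [IccExtend_of_mem _ _ hy, domRestrict_apply] at this
  · exact ⟨0, fun y hy => absurd (hy.1.trans hy.2) hdc.not_ge⟩

end

theorem stmt8_general (a b c d : ℝ) (g h : ℝ → ℝ)
    (hgm : Set.MapsTo g (Set.Icc a b) (Set.Icc c d))
    (hhm : Set.MapsTo h (Set.Icc c d) (Set.Icc a b))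
    (hinv2 : ∀ y ∈ Set.Icc c d, g (h y) = y)
    (g' : ℝ → ℝ)
    (hg : ∀ x ∈ Set.Icc a b, HasDerivWithinAt g (g' x) (Set.Icc a b) x)
    (f : ℝ → ℝ) (hf : ContinuousOn f (Set.Icc c d)) (F : ℝ → ℝ) :
    (∀ y ∈ Set.Icc c d, HasDerivWithinAt F (f y) (Set.Icc c d) y) ↔
      ∃ H : ℝ → ℝ,
        (∀ x ∈ Set.Icc a b, HasDerivWithinAt H (f (g x) * g' x) (Set.Icc a b) x) ∧
        ∀ y ∈ Set.Icc c d, F y = H (h y) := by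
  have chain {Φ : ℝ → ℝ} (hΦ : ∀ y ∈ Icc c d, HasDerivWithinAt Φ (f y) (Icc c d) y) :
      ∀ x ∈ Icc a b, HasDerivWithinAt (Φ ∘ g) (f (g x) * g' x) (Icc a b) x :=
    fun x hx => (hΦ (g x) (hgm hx)).comp x (hg x hx) hgm
  refine ⟨fun hF => ⟨F ∘ g, chain hF, fun y hy => by rw [Function.comp_apply, hinv2 y hy]⟩, ?_⟩
  rintro ⟨H, hH, hFH⟩
  obtain ⟨F₀, hF₀⟩ := hf.exists_forall_hasDerivWithinAt_Icc
  have hconst : ∀ x ∈ Icc a b, ∀ x' ∈ Icc a b, H x - F₀ (g x) = H x' - F₀ (g x') :=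
    fun x hx x' hx' => (convex_Icc a b).is_const_of_hasDerivWithinAt_zero
      (fun z hz => by simpa using (hH z hz).sub (chain hF₀ z hz)) hx hx'
  have hF : ∀ y ∈ Icc c d, ∀ z ∈ Icc c d, F z = F₀ z + (F y - F₀ y) := by
    intro y hy z hz
    have := hconst (h z) (hhm hz) (h y) (hhm hy)
    rw [hinv2 z hz, hinv2 y hy, ← hFH z hz, ← hFH y hy] at this
    linarith
  intro y hy
  exact ((hF₀ y hy).add_const _).congr (hF y hy) (hF y hy y hy)

theorem stmt8 (a b c d : ℝ) (hab : a < b) (hcd : c < d) (g h : ℝ → ℝ)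
    (hgm : Set.MapsTo g (Set.Icc a b) (Set.Icc c d))
    (hhm : Set.MapsTo h (Set.Icc c d) (Set.Icc a b))
    (hinv1 : ∀ x ∈ Set.Icc a b, h (g x) = x)
    (hinv2 : ∀ y ∈ Set.Icc c d, g (h y) = y)
    (g' : ℝ → ℝ)
    (hg : ∀ x ∈ Set.Icc a b, HasDerivWithinAt g (g' x) (Set.Icc a b) x)
    (hhc : ContinuousOn h (Set.Icc c d))
    (hhd : ∀ y ∈ Set.Ioo c d, DifferentiableAt ℝ h y)
    (f : ℝ → ℝ) (hf : ContinuousOn f (Set.Icc c d)) (F : ℝ → ℝ) :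
    (∀ y ∈ Set.Icc c d, HasDerivWithinAt F (f y) (Set.Icc c d) y) ↔
      ∃ H : ℝ → ℝ,
        (∀ x ∈ Set.Icc a b, HasDerivWithinAt H (f (g x) * g' x) (Set.Icc a b) x) ∧
        ∀ y ∈ Set.Icc c d, F y = H (h y) :=
  stmt8_general a b c d g h hgm hhm hinv2 g' hg f hf F
end

section
/- A function φ : ℝ → ℝ satisfies: φ has derivative 1/x at every point x of ℝ \ {0} within ℝ \ {0}, if and only if there exist constants c₁, c₂ ∈ ℝ such that φ(x) = log|x| + c₁ for all x < 0 and φ(x) = log|x| + c₂ for all x > 0. -/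
/-! φ and log |·| have the same derivative on each of the two connected components of ℝ \ {0},
so they differ by a constant on each, and the two constants are independent. -/

open Set Real

theorem IsOpen.exists_eq_add_of_hasDerivAt {𝕜 G : Type*} [RCLike 𝕜] [NormedAddCommGroup G]
    [NormedSpace 𝕜 G] {s : Set 𝕜} {f g f' : 𝕜 → G} (hs : IsOpen s) (hs' : IsPreconnected s)
    (hf : ∀ x ∈ s, HasDerivAt f (f' x) x) (hg : ∀ x ∈ s, HasDerivAt g (f' x) x) :
    ∃ a, s.EqOn f (g · + a) :=
  hs.exists_eq_add_of_deriv_eq hs'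
    (fun x hx => (hf x hx).differentiableAt.differentiableWithinAt)
    (fun x hx => (hg x hx).differentiableAt.differentiableWithinAt)
    (fun x hx => (hf x hx).deriv.trans (hg x hx).deriv.symm)

theorem Real.hasDerivAt_log_abs {x : ℝ} (hx : x ≠ 0) : HasDerivAt (fun y => log |y|) x⁻¹ x := by
  simpa only [log_abs] using hasDerivAt_log hx

theorem stmt10 (φ : ℝ → ℝ) :
    (∀ x ∈ ({0}ᶜ : Set ℝ), HasDerivWithinAt φ (1 / x) ({0}ᶜ : Set ℝ) x) ↔
      ∃ c₁ c₂ : ℝ, (∀ x < (0 : ℝ), φ x = Real.log |x| + c₁) ∧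
        (∀ x > (0 : ℝ), φ x = Real.log |x| + c₂) := by
  simp only [one_div]
  constructor
  · intro h
    have hφ (x : ℝ) (hx : x ≠ 0) : HasDerivAt φ x⁻¹ x :=
      (h x hx).hasDerivAt (isOpen_compl_singleton.mem_nhds hx)
    obtain ⟨c₁, hc₁⟩ := isOpen_Iio.exists_eq_add_of_hasDerivAt isPreconnected_Iio
      (fun x hx => hφ x hx.ne) (fun x hx => hasDerivAt_log_abs hx.ne)
    obtain ⟨c₂, hc₂⟩ := isOpen_Ioi.exists_eq_add_of_hasDerivAt isPreconnected_Ioi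
      (fun x hx => hφ x hx.ne') (fun x hx => hasDerivAt_log_abs hx.ne')
    exact ⟨c₁, c₂, fun x hx => hc₁ hx, fun x hx => hc₂ hx⟩
  · rintro ⟨c₁, c₂, h₁, h₂⟩ x (hx : x ≠ 0)
    refine HasDerivAt.hasDerivWithinAt ?_
    rcases hx.lt_or_gt with hneg | hpos
    · exact ((hasDerivAt_log_abs hx).add_const c₁).congr_of_eventuallyEq
        (Filter.eventually_of_mem (Iio_mem_nhds hneg) h₁)
    · exact ((hasDerivAt_log_abs hx).add_const c₂).congr_of_eventuallyEq
        (Filter.eventually_of_mem (Ioi_mem_nhds hpos) h₂)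
end

section
/- A function F : ℝ → ℝ is a primitive of the function x ↦ √(1 − x²) on the closed interval [−1, 1] if and only if there exists a constant c ∈ ℝ such that F(x) = arcsin(x)/2 + x·√(1 − x²)/2 + c for all x ∈ [−1, 1]. -/
/-!
On `(-1, 1)` the function `arcsin x / 2 + x √(1 - x²) / 2` is differentiated directly. At `±1`
`arcsin` has infinite slope, but the derivative `√(1 - x²)` of the sum extends continuously to
`[-1, 1]`, so the sum is differentiable within `[-1, 1]` at the endpoints as well. Two primitives of
the same function on a convex set differ by a constant, by the mean value inequality.
-/

open Set Filter Topology Real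

section

variable {E : Type*} [NormedAddCommGroup E] [NormedSpace ℝ E]

theorem Convex.exists_eq_add_of_hasDerivWithinAt_eq {s : Set ℝ} (hs : Convex ℝ s)
    {f g f' : ℝ → E} (hf : ∀ x ∈ s, HasDerivWithinAt f (f' x) s x)
    (hg : ∀ x ∈ s, HasDerivWithinAt g (f' x) s x) :
    ∃ c : E, ∀ x ∈ s, f x = g x + c := by
  rcases s.eq_empty_or_nonempty with rfl | ⟨x₀, hx₀⟩
  · exact ⟨0, by simp⟩
  refine ⟨f x₀ - g x₀, fun x hx => ?_⟩
  have hdiff : ∀ y ∈ s, HasDerivWithinAt (f - g) 0 s y := fun y hy => by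
    simpa using (hf y hy).sub (hg y hy)
  have := hs.norm_image_sub_le_of_norm_hasDerivWithin_le hdiff (C := 0) (by simp) hx₀ hx
  rw [zero_mul, norm_le_zero_iff, Pi.sub_apply, Pi.sub_apply, sub_eq_zero] at this
  rw [← this, add_sub_cancel]

theorem hasDerivWithinAt_Icc_of_hasDerivAt_Ioo {f f' : ℝ → E} {a b x : ℝ} (hab : a ≠ b)
    (hf : ContinuousOn f (Icc a b)) (hf' : ContinuousOn f' (Icc a b))
    (hderiv : ∀ y ∈ Ioo a b, HasDerivAt f (f' y) y) (hx : x ∈ Icc a b) :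
    HasDerivWithinAt f (f' x) (Icc a b) x := by
  have hclosure : closure (Ioo a b) = Icc a b := closure_Ioo hab
  have hlim : Tendsto (fun y => fderiv ℝ f y) (𝓝[Ioo a b] x)
      (𝓝 (ContinuousLinearMap.toSpanSingleton ℝ (f' x))) := by
    have hcont := ((ContinuousLinearMap.toSpanSingletonCLE (𝕜 := ℝ) (E := E)).continuous.tendsto
      (f' x)).comp ((hf' x hx).mono Ioo_subset_Icc_self)
    refine hcont.congr' (eventually_nhdsWithin_of_forall fun y hy => ?_)
    exact ((hderiv y hy).hasFDerivAt.fderiv).symm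
  rw [← hclosure] at hx ⊢
  exact hasFDerivWithinAt_closure_of_tendsto_fderiv
    (fun y hy => (hderiv y hy).differentiableAt.differentiableWithinAt) (convex_Ioo a b) isOpen_Ioo
    (fun y hy => (hf y (hclosure ▸ hy)).mono Ioo_subset_Icc_self) hlim

end

noncomputable def primitiveSqrtOneSubSq (x : ℝ) : ℝ := arcsin x / 2 + x * √(1 - x ^ 2) / 2

theorem hasDerivAt_primitiveSqrtOneSubSq {x : ℝ} (hx : x ∈ Ioo (-1 : ℝ) 1) :
    HasDerivAt primitiveSqrtOneSubSq (√(1 - x ^ 2)) x := by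
  have hpos : 0 < 1 - x ^ 2 := by nlinarith [hx.1, hx.2]
  have hsqrt : HasDerivAt (fun y => √(1 - y ^ 2)) (-(2 * x) / (2 * √(1 - x ^ 2))) x := by
    simpa using ((hasDerivAt_pow 2 x).const_sub 1).sqrt hpos.ne'
  have h : HasDerivAt primitiveSqrtOneSubSq
      (1 / √(1 - x ^ 2) / 2 + (1 * √(1 - x ^ 2) + x * (-(2 * x) / (2 * √(1 - x ^ 2)))) / 2) x :=
    ((hasDerivAt_arcsin hx.1.ne' hx.2.ne).div_const 2).add
      (((hasDerivAt_id' x).mul hsqrt).div_const 2)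
  refine h.congr_deriv ?_
  have hsq : √(1 - x ^ 2) ^ 2 = 1 - x ^ 2 := sq_sqrt hpos.le
  field_simp
  linear_combination -hsq

theorem hasDerivWithinAt_primitiveSqrtOneSubSq {x : ℝ} (hx : x ∈ Icc (-1 : ℝ) 1) :
    HasDerivWithinAt primitiveSqrtOneSubSq (√(1 - x ^ 2)) (Icc (-1 : ℝ) 1) x :=
  hasDerivWithinAt_Icc_of_hasDerivAt_Ioo (by norm_num)
    (by unfold primitiveSqrtOneSubSq; fun_prop) (by fun_prop)
    (fun _ hy => hasDerivAt_primitiveSqrtOneSubSq hy) hx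

theorem stmt13 (F : ℝ → ℝ) :
    (∀ x ∈ Set.Icc (-1 : ℝ) 1,
        HasDerivWithinAt F (Real.sqrt (1 - x ^ 2)) (Set.Icc (-1 : ℝ) 1) x) ↔
      ∃ c : ℝ, ∀ x ∈ Set.Icc (-1 : ℝ) 1,
        F x = Real.arcsin x / 2 + x * Real.sqrt (1 - x ^ 2) / 2 + c := by
  constructor
  · intro hF
    exact (convex_Icc (-1) 1).exists_eq_add_of_hasDerivWithinAt_eq hF
      fun _ hx => hasDerivWithinAt_primitiveSqrtOneSubSq hx
  · rintro ⟨c, hc⟩ x hx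
    exact ((hasDerivWithinAt_primitiveSqrtOneSubSq hx).add_const c).congr hc (hc x hx)
end

section
/- For every integer k, the function x ↦ log |sin x / (1 + cos x + sin x)| tends to 0 as x tends to (2k+1)π within the punctured neighborhood of (2k+1)π (i.e., Tendsto (fun x => Real.log |sin x / (1 + cos x + sin x)|) (𝓝[≠] ((2k+1)·π)) (𝓝 0)). -/
/-! Multiplying numerator and denominator by `1 - cos x` turns `sin x / (1 + cos x + sin x)` into
`(1 - cos x) / (1 - cos x + sin x)`, which is continuous at any `x₀` with `cos x₀ = -1` and takes
the value `2 / 2 = 1` there. The rewriting is valid on a punctured neighbourhood of `x₀` because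
`1 + cos x + sin x` has derivative `-1` at its zero `x₀`, so that zero is isolated. -/

open Filter Topology Real

lemma sin_div_one_add_cos_add_sin {x : ℝ} (h₁ : 1 + cos x + sin x ≠ 0)
    (h₂ : 1 - cos x + sin x ≠ 0) :
    sin x / (1 + cos x + sin x) = (1 - cos x) / (1 - cos x + sin x) := by
  rw [div_eq_div_iff h₁ h₂]
  linear_combination sin_sq_add_cos_sq x

lemma eventually_one_add_cos_add_sin_ne_zero {x₀ : ℝ} (h : cos x₀ = -1) :
    ∀ᶠ x in 𝓝[≠] x₀, 1 + cos x + sin x ≠ 0 := by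
  have hsin : sin x₀ = 0 := sin_eq_zero_iff_cos_eq.2 (Or.inr h)
  have hderiv : HasDerivAt (fun x => 1 + cos x + sin x) (-sin x₀ + cos x₀) x₀ :=
    ((hasDerivAt_cos x₀).const_add 1).add (hasDerivAt_sin x₀)
  exact hderiv.eventually_ne (by rw [hsin, h]; norm_num)

lemma tendsto_sin_div_one_add_cos_add_sin {x₀ : ℝ} (h : cos x₀ = -1) :
    Tendsto (fun x => sin x / (1 + cos x + sin x)) (𝓝[≠] x₀) (𝓝 1) := by
  have hsin : sin x₀ = 0 := sin_eq_zero_iff_cos_eq.2 (Or.inr h)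
  have hden : 1 - cos x₀ + sin x₀ ≠ 0 := by rw [hsin, h]; norm_num
  have hcont : ContinuousAt (fun x => (1 - cos x) / (1 - cos x + sin x)) x₀ := by
    fun_prop (disch := exact hden)
  have hlim : Tendsto (fun x => (1 - cos x) / (1 - cos x + sin x)) (𝓝[≠] x₀) (𝓝 1) := by
    have hval : (1 - cos x₀) / (1 - cos x₀ + sin x₀) = 1 := by rw [hsin, h]; norm_num
    simpa only [hval] using hcont.tendsto.mono_left (nhdsWithin_le_nhds (s := {x₀}ᶜ))
  refine hlim.congr' ?_
  have hden_near : ∀ᶠ x in 𝓝[≠] x₀, 1 - cos x + sin x ≠ 0 :=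
    nhdsWithin_le_nhds <| ContinuousAt.eventually_ne (by fun_prop) hden
  filter_upwards [eventually_one_add_cos_add_sin_ne_zero h, hden_near] with x h₁ h₂
  exact (sin_div_one_add_cos_add_sin h₁ h₂).symm

open Filter Topology in
theorem stmt18 (k : ℤ) :
    Tendsto (fun x : ℝ => Real.log |Real.sin x / (1 + Real.cos x + Real.sin x)|)
      (𝓝[≠] ((2 * (k : ℝ) + 1) * Real.pi)) (𝓝 0) := by
  have hcos : cos ((2 * (k : ℝ) + 1) * π) = -1 := by
    rw [← cos_int_mul_two_pi_add_pi k]; ring_nf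
  simpa using ((tendsto_sin_div_one_add_cos_add_sin hcos).abs.log (by norm_num))
end
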